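/- Conjugacy lemma for pattern reduction with prefix and postfix rules: let p, q₁, q₂ be patterns (finite words over Σ ∪ V) with p·q₁ = q₂·p. Then there exists a tuple pattern t such that (q₁, p) ⇒* t and (q₂, p) ⇒* t. -/
import Mathlib


namespace STPaper

variable {A V : Type}

/-- A word over the alphabet `A`. -/
abbrev Word (A : Type) := List A

/-- A pattern: a finite word over `A ⊕ V` (letters and variables). -/
abbrev Pat (A V : Type) := List (A ⊕ V)

/-- A tuple pattern: a finite tuple of patterns. -/
abbrev TP (A V : Type) := List (Pat A V)

/-- A column of learning data: one word per row. -/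
abbrev Col (A : Type) := List (Word A)

/-- Learning data, represented as its list of columns. -/
abbrev Data (A : Type) := List (Col A)

/-- A data-substitution `[M/x⃗]`: the number `m` of rows together with the list pairing each
variable of `x⃗` with the corresponding column of `M`. -/
structure DSub (A V : Type) where
  m : ℕ
  entries : List (V × Col A)

/-- Apply a word-valued substitution to a pattern. -/
def substPatW (θ : V → Word A) (p : Pat A V) : Word A :=
  (p.map (Sum.elim (fun a => [a]) θ)).flatten

/-- Look up the column assigned to a variable by a data-substitution (default: all-ε). -/
def lookupCol [DecidableEq V] (E : List (V × Col A)) (x : V) : Col A :=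
  match E.find? (fun e => decide (e.1 = x)) with
  | some e => e.2
  | none => []

/-- The substitution corresponding to the `i`-th row of a data-substitution. -/
def DSub.rowSub [DecidableEq V] (Θ : DSub A V) (i : ℕ) : V → Word A :=
  fun x => (lookupCol Θ.entries x).getD i []

/-- `Θ.apply t` : the matrix `Θt` (as a list of columns, each of length `Θ.m`). -/
def DSub.apply [DecidableEq V] (Θ : DSub A V) (t : TP A V) : Data A :=
  t.map (fun p => (List.range Θ.m).map (fun i => substPatW (Θ.rowSub i) p))

/-- Well-formedness of a data-substitution: pairwise-distinct variables and
all columns of length `m`. -/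
def DSub.WF (Θ : DSub A V) : Prop :=
  (Θ.entries.map Prod.fst).Nodup ∧ ∀ e ∈ Θ.entries, e.2.length = Θ.m

/-- The free variables of a tuple pattern. -/
def fvTP (t : TP A V) : Set V := {x | Sum.inr x ∈ t.flatten}

/-- Substitution of a single pattern `q` for the variable `x` in a pattern. -/
def substVar [DecidableEq A] [DecidableEq V] (x : V) (q : Pat A V) (p : Pat A V) : Pat A V :=
  (p.map (fun s => if s = Sum.inr x then q else [s])).flatten

/-- Substitution of a single pattern `q` for the variable `x` in a tuple pattern. -/
def substVarTP [DecidableEq A] [DecidableEq V] (x : V) (q : Pat A V) (t : TP A V) : TP A V :=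
  t.map (substVar x q)

/-- Simultaneous substitution `[qs/xs]p` of the patterns `qs` for the variables `xs`. -/
def substVars [DecidableEq V] (xs : List V) (qs : List (Pat A V)) (p : Pat A V) : Pat A V :=
  (p.map (fun s =>
    match s with
    | Sum.inl a => [Sum.inl a]
    | Sum.inr x =>
      match (xs.zip qs).find? (fun e => decide (e.1 = x)) with
      | some e => e.2
      | none => [Sum.inr x])).flatten

/-- Simultaneous substitution `[qs/xs]t` on a tuple pattern. -/
def substVarsTP [DecidableEq V] (xs : List V) (qs : List (Pat A V)) (t : TP A V) : TP A V :=
  t.map (substVars xs qs)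

/-- A column is the all-ε column. -/
def allEps (c : Col A) : Prop := ∀ w ∈ c, w = []

/-- The trivial tuple pattern `(x₁, …, xₙ)`. -/
def trivTP (xs : List V) : TP A V := xs.map (fun x => [Sum.inr x])

section
variable [DecidableEq A] [DecidableEq V]

/-- The rewriting relation ⟶ on pairs of a tuple pattern and a data-substitution. -/
inductive Step : (TP A V × DSub A V) → (TP A V × DSub A V) → Prop
  | pre (t : TP A V) (m : ℕ) (E : List (V × Col A)) (i j : ℕ)
      (hi : i < E.length) (hj : j < E.length) (hij : i ≠ j)
      (s : Col A) (hslen : s.length = (E[i]'hi).2.length)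
      (hpre : (E[j]'hj).2 = List.zipWith (· ++ ·) (E[i]'hi).2 s)
      (hne : ¬ allEps (E[i]'hi).2)
      (x' : V) (hx1 : x' ∉ E.map Prod.fst) (hx2 : Sum.inr x' ∉ t.flatten) :
      Step (t, ⟨m, E⟩)
        (substVarTP (E[j]'hj).1 [Sum.inr (E[i]'hi).1, Sum.inr x'] t,
         ⟨m, E.set j (x', s)⟩)
  | cpre (t : TP A V) (m : ℕ) (E : List (V × Col A)) (j : ℕ)
      (hj : j < E.length) (a : A) (s : Col A)
      (hpre : (E[j]'hj).2 = s.map (fun w => a :: w))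
      (x' : V) (hx1 : x' ∉ E.map Prod.fst) (hx2 : Sum.inr x' ∉ t.flatten) :
      Step (t, ⟨m, E⟩)
        (substVarTP (E[j]'hj).1 [Sum.inl a, Sum.inr x'] t, ⟨m, E.set j (x', s)⟩)
  | eps (t : TP A V) (m : ℕ) (E : List (V × Col A)) (j : ℕ)
      (hj : j < E.length) (heps : allEps (E[j]'hj).2) :
      Step (t, ⟨m, E⟩) (substVarTP (E[j]'hj).1 [] t, ⟨m, E.eraseIdx j⟩)

/-- `n`-step rewriting. -/
def StepN : ℕ → (TP A V × DSub A V) → (TP A V × DSub A V) → Prop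
  | 0 => fun c₁ c₂ => c₁ = c₂
  | n + 1 => fun c₁ c₃ => ∃ c₂, Step c₁ c₂ ∧ StepN n c₂ c₃

end

/-- The reduction relation ⇒ on tuple patterns. -/
inductive PStep : TP A V → TP A V → Prop
  | pre (t : TP A V) (i j : ℕ) (hi : i < t.length) (hj : j < t.length)
      (hij : i ≠ j) (p' : Pat A V)
      (hdec : t[j]'hj = (t[i]'hi) ++ p') (hne : t[i]'hi ≠ []) :
      PStep t (t.set j p')
  | cpre (t : TP A V) (j : ℕ) (hj : j < t.length) (a : A) (p' : Pat A V)
      (hdec : t[j]'hj = Sum.inl a :: p') :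
      PStep t (t.set j p')
  | eps (t : TP A V) (j : ℕ) (hj : j < t.length) (heps : t[j]'hj = []) :
      PStep t (t.eraseIdx j)

/-- A tuple pattern is solvable if it reduces to a trivial tuple of pairwise
distinct variables. -/
def Solvable (t : TP A V) : Prop :=
  ∃ ys : List V, ys.Nodup ∧ Relation.ReflTransGen PStep t (trivTP ys)

/-- The language of a tuple pattern. -/
def lang (t : TP A V) : Set (List (Word A)) :=
  {w | ∃ θ : V → Word A, w = t.map (substPatW θ)}

/-- `M ⊨ t` : there is a data-substitution `Θ` (with `rows` rows) with `Θt = M`. -/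
def Models [DecidableEq V] (M : Data A) (rows : ℕ) (t : TP A V) : Prop :=
  ∃ Θ : DSub A V, Θ.m = rows ∧ Θ.WF ∧ Θ.apply t = M

/-- `M ⊨ₛ t` : additionally, no variable of `t` is mapped to ε in every row. -/
def SModels [DecidableEq V] (M : Data A) (rows : ℕ) (t : TP A V) : Prop :=
  ∃ Θ : DSub A V, Θ.m = rows ∧ Θ.WF ∧ Θ.apply t = M ∧
    ∀ x ∈ fvTP t, ¬ allEps (lookupCol Θ.entries x)

/-- Renaming the variables of a tuple pattern. -/
def renameTP (ρ : V → V) (t : TP A V) : TP A V :=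
  t.map (List.map (Sum.map id ρ))

/-- The measure `#t` of a tuple pattern. -/
def tpMeasure (t : TP A V) : ℕ := (t.map List.length).sum + t.length

/-- `size(M)`. -/
def dataSize (M : Data A) : ℕ :=
  (M.map (fun c => (c.map (fun w => w.length + 1)).sum)).sum

/-- Learning data (as columns) whose rows enumerate the given list of tuples. -/
def colsOfRows (n : ℕ) (rows : List (List (Word A))) : Data A :=
  (List.range n).map (fun j => rows.map (fun r => r.getD j []))

/-- `m ⊨ₛ t` for a (possibly infinite) set of tuples of words. -/
def SetSModels (S : Set (List (Word A))) (t : TP A V) : Prop :=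
  ∃ θ : S → V → Word A,
    (∀ v : S, (v : List (Word A)) = t.map (substPatW (θ v))) ∧
    ∀ x ∈ fvTP t, ∃ v : S, θ v x ≠ []

/-- A rule instance of the ⇒ relation. -/
inductive RuleInst (A V : Type) where
  | pre (i j : ℕ)
  | cpre (j : ℕ) (a : A)
  | eps (j : ℕ)

/-- The reduction step derived by a given rule instance. -/
def RuleStep : RuleInst A V → TP A V → TP A V → Prop
  | .pre i j, t, t' => ∃ (hi : i < t.length) (hj : j < t.length),
      i ≠ j ∧ t[i]'hi ≠ [] ∧ ∃ p', t[j]'hj = (t[i]'hi) ++ p' ∧ t' = t.set j p'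
  | .cpre j a, t, t' => ∃ (_ : j < t.length) (p' : Pat A V),
      t.getD j [] = Sum.inl a :: p' ∧ t' = t.set j p'
  | .eps j, t, t' => ∃ (_ : j < t.length), t.getD j [] = ([] : Pat A V) ∧ t' = t.eraseIdx j

/-- Well-definedness of the residual of a tuple pattern along a rule instance. -/
def ResDefined : RuleInst A V → TP A V → Prop
  | .pre i j, t => i < t.length ∧ j < t.length ∧ (t.getD i []) <+: (t.getD j [])
  | .cpre j a, t => j < t.length ∧ ∃ p', t.getD j [] = Sum.inl a :: p'
  | .eps j, t => j < t.length ∧ t.getD j [] = ([] : Pat A V)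

/-- The residual of a tuple pattern along a rule instance. -/
def residual : RuleInst A V → TP A V → TP A V
  | .pre i j, t => t.set j ((t.getD j []).drop (t.getD i []).length)
  | .cpre j _, t => t.set j ((t.getD j []).drop 1)
  | .eps j, t => t.eraseIdx j

/-- The reduction relation ⇒ extended with the postfix rules. -/
inductive PStepX : TP A V → TP A V → Prop
  | pre (t : TP A V) (i j : ℕ) (hi : i < t.length) (hj : j < t.length)
      (hij : i ≠ j) (p' : Pat A V)
      (hdec : t[j]'hj = (t[i]'hi) ++ p') (hne : t[i]'hi ≠ []) :
      PStepX t (t.set j p')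
  | cpre (t : TP A V) (j : ℕ) (hj : j < t.length) (a : A) (p' : Pat A V)
      (hdec : t[j]'hj = Sum.inl a :: p') :
      PStepX t (t.set j p')
  | eps (t : TP A V) (j : ℕ) (hj : j < t.length) (heps : t[j]'hj = []) :
      PStepX t (t.eraseIdx j)
  | post (t : TP A V) (i j : ℕ) (hi : i < t.length) (hj : j < t.length)
      (hij : i ≠ j) (p' : Pat A V)
      (hdec : t[j]'hj = p' ++ (t[i]'hi)) (hne : t[i]'hi ≠ []) :
      PStepX t (t.set j p')
  | cpost (t : TP A V) (j : ℕ) (hj : j < t.length) (a : A) (p' : Pat A V)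
      (hdec : t[j]'hj = p' ++ [Sum.inl a]) :
      PStepX t (t.set j p')

private lemma conjugacy_aux (n : ℕ) :
    ∀ (p q₁ q₂ : Pat A V), p.length ≤ n → p ++ q₁ = q₂ ++ p →
    ∃ t : TP A V,
      Relation.ReflTransGen PStepX [q₁, p] t ∧
      Relation.ReflTransGen PStepX [q₂, p] t := by
  induction n with
  | zero =>
    intro p q₁ q₂ hl h
    have hp : p = [] := List.length_eq_zero_iff.mp (Nat.le_zero.mp hl)
    subst hp
    simp only [List.nil_append, List.append_nil] at h
    subst h
    exact ⟨_, .refl, .refl⟩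
  | succ n ih =>
    intro p q₁ q₂ hl h
    have hlen : q₁.length = q₂.length := by
      have := congrArg List.length h; simp at this; omega
    by_cases hq : q₂ = []
    · subst hq
      have hq1 : q₁ = [] := List.length_eq_zero_iff.mp (by simpa [hlen] using hlen)
      subst hq1
      exact ⟨_, .refl, .refl⟩
    by_cases hp0 : p = []
    · subst hp0
      simp only [List.nil_append, List.append_nil] at h
      subst h
      exact ⟨_, .refl, .refl⟩
    have hq1ne : q₁ ≠ [] := by
      intro hc; apply hq; apply List.length_eq_zero_iff.mp; rw [← hlen, hc]; rfl
    by_cases hd : q₂.length ≤ p.length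
    · -- q₂ is a prefix of p
      have hpre : q₂ <+: p := by
        have h1 : q₂ <+: p ++ q₁ := h ▸ ⟨p, rfl⟩
        exact List.prefix_of_prefix_length_le h1 (List.prefix_append p q₁) hd
      obtain ⟨p', hp'⟩ := hpre
      have hconj : p' ++ q₁ = q₂ ++ p' := by
        have : q₂ ++ (p' ++ q₁) = q₂ ++ (q₂ ++ p') := by
          rw [← List.append_assoc, hp', h]
        exact List.append_cancel_left this
      have hpost : p = p' ++ q₁ := by rw [← hp', ← hconj]
      have s1 : PStepX [q₁, p] [q₁, p'] := by
        have := PStepX.post (t := [q₁, p]) (i := 0) (j := 1)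
          (by simp) (by simp) (by simp) p' (by simpa using hpost) (by simpa using hq1ne)
        simpa using this
      have s2 : PStepX [q₂, p] [q₂, p'] := by
        have := PStepX.pre (t := [q₂, p]) (i := 0) (j := 1)
          (by simp) (by simp) (by simp) p' (by simpa using hp'.symm) (by simpa using hq)
        simpa using this
      have hlen' : p'.length ≤ n := by
        have := congrArg List.length hp'
        have hq2pos : 0 < q₂.length := List.length_pos_iff.mpr hq
        simp at this; omega
      obtain ⟨t, ht1, ht2⟩ := ih p' q₁ q₂ hlen' hconj
      exact ⟨t, .head s1 ht1, .head s2 ht2⟩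
    · -- p is a prefix of q₂
      push_neg at hd
      have hpre : p <+: q₂ := by
        have h1 : p <+: q₂ ++ p := h ▸ List.prefix_append p q₁
        exact List.prefix_of_prefix_length_le h1 (List.prefix_append q₂ p) hd.le
      obtain ⟨r, hr⟩ := hpre
      have hq1 : q₁ = r ++ p := by
        have : p ++ q₁ = p ++ (r ++ p) := by rw [h, ← hr, List.append_assoc]
        exact List.append_cancel_left this
      have s1 : PStepX [q₁, p] [r, p] := by
        have := PStepX.post (t := [q₁, p]) (i := 1) (j := 0)
          (by simp) (by simp) (by simp) r (by simpa using hq1) (by simpa using hp0)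
        simpa using this
      have s2 : PStepX [q₂, p] [r, p] := by
        have := PStepX.pre (t := [q₂, p]) (i := 1) (j := 0)
          (by simp) (by simp) (by simp) r (by simpa using hr.symm) (by simpa using hp0)
        simpa using this
      exact ⟨[r, p], .head s1 .refl, .head s2 .refl⟩

/-- **Conjugacy lemma for pattern reduction with prefix and postfix
rules.** If `p·q₁ = q₂·p` for patterns `p, q₁, q₂`, then there is a tuple pattern `t`
such that `(q₁, p) ⇒* t` and `(q₂, p) ⇒* t` (for the reduction relation extended with
the postfix rules). -/
theorem conjugacy [Nontrivial A] [Countable V] [Infinite V]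
    (p q₁ q₂ : Pat A V) (h : p ++ q₁ = q₂ ++ p) :
    ∃ t : TP A V,
      Relation.ReflTransGen PStepX [q₁, p] t ∧
      Relation.ReflTransGen PStepX [q₂, p] t := by
  exact conjugacy_aux p.length p q₁ q₂ le_rfl h

end STPaper
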